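/- Let I be a directed partially ordered set, (G_i) an inverse system of finite groups over I, (X_i) and (Y_i) inverse systems of sets over I with each X_i a G_i-set compatibly with the transition maps, and (f_i : X_i → Y_i) a compatible family of G_i-invariant maps such that for every i the group G_i acts transitively on each fibre of f_i. Then the induced group lim G_i acts transitively on each fibre of the induced map lim f : lim X_i → lim Y_i; that is, if x, x′ ∈ lim X_i satisfy (lim f)(x) = (lim f)(x′), then there exists g ∈ lim G_i with g · x = x′. -/

import Mathlib

open CategoryTheory

/-!
Fix compatible families `x, x'`. The transporters `{g ∈ G i | g • x i = x' i}` are nonempty by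
transitivity on the fibres of `f i`, finite since `G i` is, and mapped into each other by the
transition maps because these are equivariant. By König's lemma for cofiltered systems of finite
nonempty sets they admit a compatible family, which is the required element of `lim G i`.
-/

section CompatibleSubfamily

variable {I : Type*} [Preorder I] {G : I → Type*}
  (φ : ∀ ⦃i j : I⦄, i ≤ j → G j → G i)
  (hφ_id : ∀ (i : I) (g : G i), φ (le_refl i) g = g)
  (hφ_comp : ∀ ⦃i j l : I⦄ (hij : i ≤ j) (hjl : j ≤ l) (g : G l),
    φ hij (φ hjl g) = φ (hij.trans hjl) g)
  (S : ∀ i, Set (G i)) (hS : ∀ ⦃i j : I⦄ (h : i ≤ j), Set.MapsTo (φ h) (S j) (S i))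

include hφ_id hφ_comp in
def inverseSubsystem : Iᵒᵖ ⥤ Type _ where
  obj i := S i.unop
  map h := TypeCat.ofHom fun g => ⟨φ h.unop.le g.1, hS h.unop.le g.2⟩
  map_id i := by
    ext g
    exact hφ_id _ g.1
  map_comp hkj hji := by
    ext g
    exact (hφ_comp hji.unop.le hkj.unop.le g.1).symm

include hφ_id hφ_comp hS in
theorem exists_compatible_mem_of_finite_of_nonempty [IsDirected I (· ≤ ·)]
    [hfin : ∀ i, Finite (S i)] (hne : ∀ i, (S i).Nonempty) :
    ∃ g : ∀ i, G i, (∀ ⦃i j : I⦄ (h : i ≤ j), φ h (g j) = g i) ∧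
      ∀ i, g i ∈ S i := by
  let F := inverseSubsystem φ hφ_id hφ_comp S hS
  have : ∀ i, Finite (F.obj i) := fun i => hfin i.unop
  have : ∀ i, Nonempty (F.obj i) := fun i => (hne i.unop).to_subtype
  obtain ⟨u, hu⟩ := nonempty_sections_of_finite_inverse_system F
  exact ⟨fun i => (u (Opposite.op i)).1, fun i j h => congrArg Subtype.val (hu (homOfLE h).op),
    fun i => (u (Opposite.op i)).2⟩

end CompatibleSubfamily

theorem invLim_transitive_on_fibres_general
    {I : Type*} [PartialOrder I] [IsDirected I (· ≤ ·)]
    (G : I → Type*) (X : I → Type*) (Y : I → Type*)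
    [∀ i, Group (G i)] [∀ i, Finite (G i)] [∀ i, MulAction (G i) (X i)]
    (φ : ∀ ⦃i j : I⦄, i ≤ j → G j →* G i)
    (π : ∀ ⦃i j : I⦄, i ≤ j → X j → X i)
    (hφ_id : ∀ (i : I) (g : G i), φ (le_refl i) g = g)
    (hφ_comp : ∀ ⦃i j l : I⦄ (hij : i ≤ j) (hjl : j ≤ l) (g : G l),
      φ hij (φ hjl g) = φ (hij.trans hjl) g)
    (hequiv : ∀ ⦃i j : I⦄ (h : i ≤ j) (g : G j) (x : X j),
      π h (g • x) = φ h g • π h x)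
    (f : ∀ i, X i → Y i)
    (hf_trans : ∀ (i : I) (x x' : X i), f i x = f i x' → ∃ g : G i, g • x = x') :
    ∀ (x x' : {x : ∀ i, X i // ∀ ⦃i j : I⦄ (h : i ≤ j), π h (x j) = x i}),
      (∀ i, f i (x.1 i) = f i (x'.1 i)) →
      ∃ g : {g : ∀ i, G i // ∀ ⦃i j : I⦄ (h : i ≤ j), φ h (g j) = g i},
        ∀ i, g.1 i • x.1 i = x'.1 i := by
  intro x x' hxx'
  let transporter (i : I) : Set (G i) := {g | g • x.1 i = x'.1 i}
  have hmaps : ∀ ⦃i j : I⦄ (h : i ≤ j), Set.MapsTo (φ h) (transporter j) (transporter i) :=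
    fun i j h g (hg : g • x.1 j = x'.1 j) => by
      change φ h g • x.1 i = x'.1 i
      rw [← x.2 h, ← hequiv h, hg, x'.2 h]
  have hne (i : I) : (transporter i).Nonempty := hf_trans i _ _ (hxx' i)
  obtain ⟨g, hg_compat, hg_mem⟩ := exists_compatible_mem_of_finite_of_nonempty
    (fun i j h => φ h) hφ_id hφ_comp transporter hmaps hne
  exact ⟨⟨g, hg_compat⟩, hg_mem⟩

/-- Let `I` be a directed partially ordered set, `(G i)` an inverse system of *finite*
groups over `I`, `(X i)` and `(Y i)` inverse systems of sets over `I` with each `X i` a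
`G i`-set compatibly with the transition maps, and `(f i : X i → Y i)` a compatible
family of `G i`-invariant maps such that each `G i` acts transitively on each fibre of
`f i`.  Then the induced group `lim G i` acts transitively on each fibre of the induced
map `lim f : lim X i → lim Y i`: if `x, x'` are compatible families with
`f i (x i) = f i (x' i)` for all `i`, then there is a compatible family `g` with
`g i • x i = x' i` for all `i`. -/
theorem invLim_transitive_on_fibres
    {I : Type*} [PartialOrder I] [IsDirected I (· ≤ ·)]
    (G : I → Type*) (X : I → Type*) (Y : I → Type*)
    [∀ i, Group (G i)] [∀ i, Finite (G i)] [∀ i, MulAction (G i) (X i)]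
    (φ : ∀ ⦃i j : I⦄, i ≤ j → G j →* G i)
    (π : ∀ ⦃i j : I⦄, i ≤ j → X j → X i)
    (σ : ∀ ⦃i j : I⦄, i ≤ j → Y j → Y i)
    (hφ_id : ∀ (i : I) (g : G i), φ (le_refl i) g = g)
    (hφ_comp : ∀ ⦃i j l : I⦄ (hij : i ≤ j) (hjl : j ≤ l) (g : G l),
      φ hij (φ hjl g) = φ (hij.trans hjl) g)
    (hπ_id : ∀ (i : I) (x : X i), π (le_refl i) x = x)
    (hπ_comp : ∀ ⦃i j l : I⦄ (hij : i ≤ j) (hjl : j ≤ l) (x : X l),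
      π hij (π hjl x) = π (hij.trans hjl) x)
    (hσ_id : ∀ (i : I) (y : Y i), σ (le_refl i) y = y)
    (hσ_comp : ∀ ⦃i j l : I⦄ (hij : i ≤ j) (hjl : j ≤ l) (y : Y l),
      σ hij (σ hjl y) = σ (hij.trans hjl) y)
    (hequiv : ∀ ⦃i j : I⦄ (h : i ≤ j) (g : G j) (x : X j),
      π h (g • x) = φ h g • π h x)
    (f : ∀ i, X i → Y i)
    (hf_compat : ∀ ⦃i j : I⦄ (h : i ≤ j) (x : X j), σ h (f j x) = f i (π h x))
    (hf_inv : ∀ (i : I) (g : G i) (x : X i), f i (g • x) = f i x)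
    (hf_trans : ∀ (i : I) (x x' : X i), f i x = f i x' → ∃ g : G i, g • x = x') :
    ∀ (x x' : {x : ∀ i, X i // ∀ ⦃i j : I⦄ (h : i ≤ j), π h (x j) = x i}),
      (∀ i, f i (x.1 i) = f i (x'.1 i)) →
      ∃ g : {g : ∀ i, G i // ∀ ⦃i j : I⦄ (h : i ≤ j), φ h (g j) = g i},
        ∀ i, g.1 i • x.1 i = x'.1 i :=
  invLim_transitive_on_fibres_general G X Y φ π hφ_id hφ_comp hequiv f hf_trans
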